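/- Let n ≥ 2, let α > 0, let l ∈ {1, …, n−1}, and let b_1, …, b_n > 0 satisfy b_1·b_2⋯b_n = α^n and e_{n−l}(b_1,…,b_n) = C(n, l)·α^{n−l}, where e_{n−l} is the elementary symmetric polynomial of degree n−l and C(n,l) is the binomial coefficient. Then b_1 = b_2 = … = b_n = α. -/

import Mathlib

/-!
Scale to `c i = b i / α`, so that `∏ c = 1` and the `C(n, l)` products of `(n - l)`-subsets of
the `c i` sum to `C(n, l)`. Each `c i` occurs in the same number of these subsets, so their product
is a power of `∏ c = 1`: arithmetic and geometric mean of the subset products are both `1`, and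
by the equality case of AM-GM all subset products coincide. Since `0 < n - l < n`, two subsets
can differ in a single element, which forces all `c i` to be equal, hence equal to `1`.
-/

open Finset

theorem Finset.prod_powersetCard_prod {α M : Type*} [DecidableEq α] [CommMonoid M]
    {k : ℕ} (hk : 1 ≤ k) (s : Finset α) (f : α → M) :
    ∏ t ∈ s.powersetCard k, ∏ i ∈ t, f i = (∏ i ∈ s, f i) ^ (#s - 1).choose (k - 1) := by
  rw [prod_comm' (t' := s) (s' := fun i => {t ∈ s.powersetCard k | {i} ⊆ t})
    (by intro t i; simp only [mem_filter, mem_powersetCard, singleton_subset_iff]; grind),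
    ← prod_pow]
  refine prod_congr rfl fun i hi => ?_
  rw [prod_const, card_filter_powersetCard_subset _ _ _ (by simpa using hi) (by simpa using hk),
    card_singleton]

theorem Real.eq_of_prod_eq_one_of_sum_eq_card {ι : Type*} {s : Finset ι} {z : ι → ℝ}
    (hz : ∀ i ∈ s, 0 ≤ z i) (hprod : ∏ i ∈ s, z i = 1) (hsum : ∑ i ∈ s, z i = #s) :
    ∀ i ∈ s, ∀ j ∈ s, z i = z j := by
  rcases s.eq_empty_or_nonempty with rfl | hs
  · simp
  have hcard : (0 : ℝ) < #s := by exact_mod_cast hs.card_pos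
  refine (Real.geom_mean_eq_arith_mean_weighted_iff_of_pos s (fun _ => (#s : ℝ)⁻¹) z
    (fun _ _ => inv_pos.mpr hcard) ?_ hz).mp ?_
  · rw [sum_const, nsmul_eq_mul, mul_inv_cancel₀ hcard.ne']
  · rw [Real.finsetProd_rpow s z hz, hprod, Real.one_rpow, ← mul_sum, hsum,
      inv_mul_cancel₀ hcard.ne']

theorem Finset.eq_of_powersetCard_prod_eq {α M : Type*} [DecidableEq α]
    [CommMonoidWithZero M] [Nontrivial M] [IsCancelMulZero M] {s : Finset α} {f : α → M}
    (hf : ∀ i ∈ s, f i ≠ 0)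
    {k : ℕ} (hk : 1 ≤ k) (hks : k < #s)
    (heq : ∀ t ∈ s.powersetCard k, ∀ t' ∈ s.powersetCard k, ∏ i ∈ t, f i = ∏ i ∈ t', f i)
    {i j : α} (hi : i ∈ s) (hj : j ∈ s) : f i = f j := by
  rcases eq_or_ne i j with rfl | hij
  · rfl
  obtain ⟨r, hr, hrcard⟩ := exists_subset_card_eq (s := s \ {i, j}) (n := k - 1) (by
    rw [card_sdiff_of_subset (by simp [insert_subset_iff, hi, hj]), card_pair hij]
    omega)
  have hir : i ∉ r := fun h => by simpa using hr h
  have hjr : j ∉ r := fun h => by simpa using hr h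
  have hrs : r ⊆ s := hr.trans sdiff_subset
  have key := heq
    (insert i r) (by simp [insert_subset_iff, hi, hrs, card_insert_of_notMem hir, hrcard]; omega)
    (insert j r) (by simp [insert_subset_iff, hj, hrs, card_insert_of_notMem hjr, hrcard]; omega)
  rw [prod_insert hir, prod_insert hjr] at key
  exact mul_right_cancel₀ (prod_ne_zero_iff.mpr fun x hx => hf x (hrs hx)) key

theorem esymm_amgm_equality_case_general
    (n : ℕ) (α : ℝ) (hα : 0 < α)
    (l : ℕ) (hl : 1 ≤ l) (hl' : l ≤ n - 1)
    (b : Fin n → ℝ) (hb : ∀ i, 0 < b i)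
    (hprod : ∏ i, b i = α ^ n)
    (hesymm : ∑ t ∈ (Finset.univ : Finset (Fin n)).powersetCard (n - l), ∏ i ∈ t, b i =
      (n.choose l : ℝ) * α ^ (n - l)) :
    ∀ i, b i = α := by
  set S := (univ : Finset (Fin n)).powersetCard (n - l)
  set c : Fin n → ℝ := fun i => b i / α
  have hc : ∀ i, 0 < c i := fun i => div_pos (hb i) hα
  have hcprod : ∏ i, c i = 1 := by
    simp [c, prod_div_distrib, hprod, hα.ne']
  have hcsum : ∑ t ∈ S, ∏ i ∈ t, c i = #S := by
    have hsubprod : ∀ t ∈ S, ∏ i ∈ t, c i = (∏ i ∈ t, b i) / α ^ (n - l) := by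
      intro t ht
      rw [prod_div_distrib, prod_const, mem_powersetCard_univ.mp ht]
    rw [sum_congr rfl hsubprod, ← sum_div, hesymm, mul_div_cancel_right₀ _ (by positivity),
      card_powersetCard, card_univ, Fintype.card_fin, Nat.choose_symm (by omega)]
  have hSprod : ∏ t ∈ S, ∏ i ∈ t, c i = 1 := by
    rw [prod_powersetCard_prod (by omega), hcprod, one_pow]
  have hSconst := Real.eq_of_prod_eq_one_of_sum_eq_card
    (fun t _ => prod_nonneg fun i _ => (hc i).le) hSprod hcsum
  have hconst : ∀ i j, c i = c j := fun i j =>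
    eq_of_powersetCard_prod_eq (fun i _ => (hc i).ne') (by omega) (by simp; omega) hSconst
      (mem_univ i) (mem_univ j)
  intro i
  have hci : c i ^ n = 1 := by
    rw [← hcprod, ← Fin.prod_const]
    exact prod_congr rfl fun j _ => hconst i j
  exact (div_eq_one_iff_eq hα.ne').mp ((pow_eq_one_iff_of_nonneg (hc i).le (by omega)).mp hci)

theorem esymm_amgm_equality_case
    (n : ℕ) (hn : 2 ≤ n) (α : ℝ) (hα : 0 < α)
    (l : ℕ) (hl : 1 ≤ l) (hl' : l ≤ n - 1)
    (b : Fin n → ℝ) (hb : ∀ i, 0 < b i)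
    (hprod : ∏ i, b i = α ^ n)
    (hesymm : ∑ t ∈ (Finset.univ : Finset (Fin n)).powersetCard (n - l), ∏ i ∈ t, b i =
      (n.choose l : ℝ) * α ^ (n - l)) :
    ∀ i, b i = α :=
  esymm_amgm_equality_case_general n α hα l hl hl' b hb hprod hesymm
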